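/- Let the sortition instance be κ-rich with n pool members and panel size k ≥ 1, and let c ≤ κ'·n for some 0 ≤ κ' < κ. Then the external manipulability of uniform panel selection (MaxEntropy) satisfies: for every coalition C of size c, every joint misreport, and every non-coalition member i ∉ C, π(i) − π̃(i) ≤ k/(κ^k · n), where π and π̃ are the selection probabilities of i under the uniform distribution over the true panel set 𝒫 and over the manipulated panel set 𝒫̃, respectively. -/

import Mathlib

open scoped Classical

/-- A sortition instance (features `feat`, panel set `Pan`, panel size `k`) is `κ`-rich if there
is a set `Wstar` of feature-value vectors present in the pool such that every vector in `Wstar`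
is shared by at least `κ·n + k` pool members, and some panel consists solely of members with
vectors in `Wstar`. -/
def IsRich {N : Type*} [Fintype N] {F : Type*} {V : F → Type*}
    (feat : N → ∀ f : F, V f) (Pan : Finset (Finset N)) (k : ℕ) (κ : ℝ) : Prop :=
  ∃ Wstar : Set (∀ f : F, V f),
    (∀ wv ∈ Wstar, ∃ i : N, feat i = wv) ∧
    (∀ wv ∈ Wstar,
      κ * (Fintype.card N) + k ≤ ((Finset.univ.filter fun i : N => feat i = wv).card : ℝ)) ∧
    ∃ P₀ ∈ Pan, ∀ i ∈ P₀, feat i ∈ Wstar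

/-!
Since the manipulated selection probability is nonnegative, it suffices to bound the true one,
`π(i) = #{P ∈ 𝒫 | i ∈ P} / #𝒫`. At most `C(n-1, k-1)` panels contain `i`. On the other hand,
every `k`-set with the same multiset of feature vectors as the rich panel `P₀` meets the same
quotas, and filling its slots one at a time from classes of at least `κn + k` members yields at
least `(κn)^k / k!` such sets. Hence `π(i) ≤ C(n-1, k-1) k! / (κn)^k ≤ k / (κ^k n)`.
-/

open Finset
open scoped Nat

section Copies

variable {N W : Type*} [Fintype N] {feat : N → W}

noncomputable def copies (feat : N → W) (s : Finset N) : Finset (Finset N) :=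
  {P | P.val.map feat = s.val.map feat}

lemma mem_copies {s P : Finset N} : P ∈ copies feat s ↔ P.val.map feat = s.val.map feat := by
  simp [copies]

lemma self_mem_copies (s : Finset N) : s ∈ copies feat s :=
  mem_copies.2 rfl

lemma card_eq_of_mem_copies {s P : Finset N} (h : P ∈ copies feat s) : #P = #s := by
  simpa using congrArg Multiset.card (mem_copies.1 h)

lemma card_filter_comp_eq_of_mem_copies (q : W → Prop) {s P : Finset N}
    (h : P ∈ copies feat s) : #{t ∈ P | q (feat t)} = #{t ∈ s | q (feat t)} := by
  simpa [card_def, Multiset.filter_map] using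
    congrArg (fun m => Multiset.card (m.filter q)) (mem_copies.1 h)

variable [DecidableEq N]

lemma insert_mem_copies_insert {x y : N} {s P : Finset N} (hx : x ∉ s) (hy : y ∉ P)
    (hxy : feat y = feat x) (hP : P ∈ copies feat s) :
    insert y P ∈ copies feat (insert x s) := by
  rw [mem_copies, insert_val_of_notMem hx, insert_val_of_notMem hy, Multiset.map_cons,
    Multiset.map_cons, hxy, mem_copies.1 hP]

/-- Double counting the pairs `P ⊆ Q` with `P` a copy of `s` and `Q` a copy of `insert x s`:
every `P` extends by any member of `x`'s class outside `P`, and every `Q` has only `#s + 1`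
subsets of size `#s`. -/
lemma card_copies_mul_le_card_copies_insert_mul {x : N} {s : Finset N} (hx : x ∉ s) :
    #(copies feat s) * (#{t | feat t = feat x} - #s) ≤
      #(copies feat (insert x s)) * (#s + 1) := by
  refine card_mul_le_card_mul (· ⊆ ·) (fun P hP => ?_) (fun Q hQ => ?_)
  · calc #{t | feat t = feat x} - #s
        ≤ #(({t | feat t = feat x} : Finset N) \ P) := by
          rw [← card_eq_of_mem_copies hP]
          exact le_card_sdiff _ _
      _ ≤ #(bipartiteAbove (· ⊆ ·) (copies feat (insert x s)) P) := by
          refine card_le_card_of_injOn (insert · P) (fun y hy => ?_) (fun y hy z hz hyz => ?_)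
          · obtain ⟨hyx, hyP⟩ := mem_sdiff.1 (mem_coe.1 hy)
            exact mem_coe.2 ((mem_bipartiteAbove _).2
              ⟨insert_mem_copies_insert hx hyP (mem_filter.1 hyx).2 hP, subset_insert y P⟩)
          · exact (insert_inj (mem_sdiff.1 hy).2).1 hyz
  · calc #(bipartiteBelow (· ⊆ ·) (copies feat s) Q)
        ≤ #(Q.powersetCard #s) := by
          refine card_le_card fun P hP => ?_
          rw [mem_bipartiteBelow] at hP
          exact mem_powersetCard.2 ⟨hP.2, card_eq_of_mem_copies hP.1⟩
      _ = #s + 1 := by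
          rw [card_powersetCard, card_eq_of_mem_copies hQ, card_insert_of_notMem hx,
            Nat.choose_succ_self_right]

theorem pow_div_factorial_le_card_copies {M : ℝ} (hM : 0 ≤ M) {k : ℕ} {s : Finset N}
    (hs : #s ≤ k) (hclass : ∀ x ∈ s, M + k ≤ #{t | feat t = feat x}) :
    M ^ #s / (#s)! ≤ #(copies feat s) := by
  induction s using Finset.induction_on with
  | empty => simpa using card_pos.2 ⟨∅, self_mem_copies (feat := feat) ∅⟩
  | insert x s hx ih =>
    rw [card_insert_of_notMem hx] at hs ⊢
    have ih := ih (by omega) fun y hy => hclass y (mem_insert_of_mem hy)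
    have hclass_x : (#s : ℝ) + M ≤ #{t | feat t = feat x} := by
      have := hclass x (mem_insert_self x s)
      have : (#s : ℝ) + 1 ≤ k := by exact_mod_cast hs
      linarith
    have hfresh : M ≤ ((#{t | feat t = feat x} - #s : ℕ) : ℝ) := by
      rw [Nat.cast_sub (by exact_mod_cast (by linarith : (#s : ℝ) ≤ #{t | feat t = feat x}))]
      linarith
    have hstep : (#(copies feat s) : ℝ) * ((#{t | feat t = feat x} - #s : ℕ) : ℝ) ≤
        #(copies feat (insert x s)) * (#s + 1) := by
      exact_mod_cast card_copies_mul_le_card_copies_insert_mul hx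
    calc M ^ (#s + 1) / (#s + 1)! = M * (M ^ #s / (#s)!) / (#s + 1) := by
          rw [pow_succ, Nat.factorial_succ]
          push_cast
          field_simp
      _ ≤ ((#{t | feat t = feat x} - #s : ℕ) : ℝ) * #(copies feat s) / (#s + 1) := by
          gcongr
      _ ≤ #(copies feat (insert x s)) := by
          rw [div_le_iff₀ (by positivity)]
          linarith

end Copies

section Panels

variable {N F : Type*} {V : F → Type*} [Fintype N]

noncomputable def panels (feat : N → ∀ f : F, V f) (k : ℕ) (ℓ u : ((f : F) × V f) → ℕ) :
    Finset (Finset N) :=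
  Finset.univ.filter fun P : Finset N =>
    P.card = k ∧ ∀ (f : F) (v : V f),
      ℓ ⟨f, v⟩ ≤ (P.filter fun t => feat t f = v).card ∧
      (P.filter fun t => feat t f = v).card ≤ u ⟨f, v⟩

variable {feat : N → ∀ f : F, V f} {k : ℕ} {ℓ u : ((f : F) × V f) → ℕ}

lemma sized_panels : (panels feat k ℓ u : Set (Finset N)).Sized k :=
  fun _ hP => (mem_filter.1 hP).2.1

lemma copies_subset_panels {P₀ : Finset N} (hP₀ : P₀ ∈ panels feat k ℓ u) :
    copies feat P₀ ⊆ panels feat k ℓ u := by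
  intro P hP
  obtain ⟨-, hcard, hquota⟩ := mem_filter.1 hP₀
  refine mem_filter.2 ⟨mem_univ P, (card_eq_of_mem_copies hP).trans hcard, fun f v => ?_⟩
  rw [card_filter_comp_eq_of_mem_copies (fun w => w f = v) hP]
  exact hquota f v

theorem IsRich.pow_div_factorial_le_card_panels [DecidableEq N] {κ : ℝ} (hκ : 0 ≤ κ)
    (h : IsRich feat (panels feat k ℓ u) k κ) :
    (κ * Fintype.card N) ^ k / k ! ≤ #(panels feat k ℓ u) := by
  obtain ⟨Wstar, -, hlarge, P₀, hP₀, hP₀W⟩ := h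
  have hcard : #P₀ = k := sized_panels hP₀
  calc (κ * Fintype.card N) ^ k / k ! ≤ #(copies feat P₀) := by
        rw [← hcard]
        exact pow_div_factorial_le_card_copies (by positivity) hcard.le
          fun x hx => hcard ▸ hlarge _ (hP₀W x hx)
    _ ≤ #(panels feat k ℓ u) := by exact_mod_cast card_le_card (copies_subset_panels hP₀)

end Panels

section SelectionProbability

variable {N : Type*} [Fintype N] [DecidableEq N]

lemma card_filter_mem_le_choose {𝒜 : Finset (Finset N)} {k : ℕ}
    (h𝒜 : (𝒜 : Set (Finset N)).Sized k) (i : N) :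
    #{P ∈ 𝒜 | i ∈ P} ≤ (Fintype.card N - 1).choose (k - 1) := by
  calc #{P ∈ 𝒜 | i ∈ P} ≤ #((univ.erase i).powersetCard (k - 1)) := by
        refine card_le_card_of_injOn (·.erase i) (fun P hP => ?_)
          fun P hP Q hQ => erase_injOn' i (mem_filter.1 hP).2 (mem_filter.1 hQ).2
        obtain ⟨hP𝒜, hiP⟩ := mem_filter.1 hP
        exact mem_powersetCard.2 ⟨erase_subset_erase i (subset_univ P),
          by rw [card_erase_of_mem hiP, h𝒜 hP𝒜]⟩
    _ = (Fintype.card N - 1).choose (k - 1) := by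
        rw [card_powersetCard, card_erase_of_mem (mem_univ i), card_univ]

lemma Nat.choose_pred_mul_factorial_mul_le {k : ℕ} (hk : 1 ≤ k) (n : ℕ) :
    (n - 1).choose (k - 1) * k ! * n ≤ k * n ^ k := by
  obtain ⟨j, rfl⟩ : ∃ j, k = j + 1 := ⟨k - 1, by omega⟩
  calc (n - 1).choose j * (j + 1)! * n = (j + 1) * ((n - 1).descFactorial j * n) := by
        rw [Nat.descFactorial_eq_factorial_mul_choose, Nat.factorial_succ]
        ring
    _ ≤ (j + 1) * (n ^ j * n) := by
        gcongr
        exact (Nat.descFactorial_le_pow _ _).trans (Nat.pow_le_pow_left (Nat.sub_le n 1) j)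
    _ = (j + 1) * n ^ (j + 1) := by rw [pow_succ]

theorem card_filter_mem_div_card_le {𝒜 : Finset (Finset N)} {k : ℕ} (hk : 1 ≤ k)
    (h𝒜 : (𝒜 : Set (Finset N)).Sized k) {κ : ℝ} (hκ : 0 < κ)
    (hcard : (κ * Fintype.card N) ^ k / k ! ≤ #𝒜) (i : N) :
    (#{P ∈ 𝒜 | i ∈ P} : ℝ) / #𝒜 ≤ k / (κ ^ k * Fintype.card N) := by
  set n := Fintype.card N
  have hn : (0 : ℝ) < n := by exact_mod_cast Fintype.card_pos_iff.2 ⟨i⟩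
  have hbinom : ((n - 1).choose (k - 1) : ℝ) * k ! * n ≤ k * n ^ k := by
    exact_mod_cast Nat.choose_pred_mul_factorial_mul_le hk n
  calc (#{P ∈ 𝒜 | i ∈ P} : ℝ) / #𝒜
      ≤ (n - 1).choose (k - 1) / ((κ * n) ^ k / k !) :=
        div_le_div₀ (by positivity) (by exact_mod_cast card_filter_mem_le_choose h𝒜 i)
          (by positivity) hcard
    _ ≤ k / (κ ^ k * n) := by
        rw [div_div_eq_mul_div, mul_pow, div_le_div_iff₀ (by positivity) (by positivity)]
        calc ((n - 1).choose (k - 1) : ℝ) * k ! * (κ ^ k * n)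
            = κ ^ k * (((n - 1).choose (k - 1) : ℝ) * k ! * n) := by ring
          _ ≤ κ ^ k * (k * n ^ k) := by gcongr
          _ = k * (κ ^ k * n ^ k) := by ring

end SelectionProbability

theorem external_manipulability_bound_general
    {N : Type*} [Fintype N] [DecidableEq N]
    {F : Type*} {V : F → Type*}
    (feat : N → ∀ f : F, V f) (k : ℕ) (hk : 1 ≤ k)
    (ℓ u : ((f : F) × V f) → ℕ)
    (Pan : Finset (Finset N))
    (hPan : Pan = Finset.univ.filter fun P : Finset N =>
      P.card = k ∧ ∀ (f : F) (v : V f),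
        ℓ ⟨f, v⟩ ≤ (P.filter fun t => feat t f = v).card ∧
        (P.filter fun t => feat t f = v).card ≤ u ⟨f, v⟩)
    (κ κ' : ℝ) (hκ : 0 < κ)
    (hrich : IsRich feat Pan k κ) :
    ∀ (feat' : N → ∀ f : F, V f) (C : Finset N),
      (C.card : ℝ) ≤ κ' * Fintype.card N →
      (∀ i ∉ C, feat' i = feat i) →
      ∀ Pant : Finset (Finset N),
        Pant = (Finset.univ.filter fun P : Finset N =>
          P.card = k ∧ ∀ (f : F) (v : V f),
            ℓ ⟨f, v⟩ ≤ (P.filter fun t => feat' t f = v).card ∧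
            (P.filter fun t => feat' t f = v).card ≤ u ⟨f, v⟩) →
        ∀ i ∉ C,
          ((Pan.filter fun P => i ∈ P).card : ℝ) / Pan.card -
              ((Pant.filter fun P => i ∈ P).card : ℝ) / Pant.card ≤
            k / (κ ^ k * Fintype.card N) := by
  intro feat' C _ _ Pant _ i _
  replace hPan : Pan = panels feat k ℓ u := hPan
  subst hPan
  have hπ := card_filter_mem_div_card_le hk sized_panels hκ
    (hrich.pow_div_factorial_le_card_panels hκ.le) i
  have hπ' : (0 : ℝ) ≤ ((Pant.filter fun P => i ∈ P).card : ℝ) / Pant.card := by positivity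
  linarith

/-- External manipulability of uniform (MaxEntropy) panel selection: in a
`κ`-rich instance with `n` pool members and panel size `k ≥ 1`, for every coalition `C` of size
`c ≤ κ'·n` (with `0 ≤ κ' < κ`), every joint misreport `feat'` (agreeing with `feat` off `C`),
and every non-coalition member `i ∉ C`, the loss in selection probability under the uniform
distributions over the true and manipulated panel sets is at most `k/(κ^k · n)`. -/
theorem external_manipulability_bound
    {N : Type*} [Fintype N] [DecidableEq N]
    {F : Type*} {V : F → Type*}
    (feat : N → ∀ f : F, V f) (k : ℕ) (hk : 1 ≤ k)
    (ℓ u : ((f : F) × V f) → ℕ)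
    (Pan : Finset (Finset N))
    (hPan : Pan = Finset.univ.filter fun P : Finset N =>
      P.card = k ∧ ∀ (f : F) (v : V f),
        ℓ ⟨f, v⟩ ≤ (P.filter fun t => feat t f = v).card ∧
        (P.filter fun t => feat t f = v).card ≤ u ⟨f, v⟩)
    (κ κ' : ℝ) (hκ : 0 < κ) (hκ'0 : 0 ≤ κ') (hκ' : κ' < κ)
    (hrich : IsRich feat Pan k κ) :
    ∀ (feat' : N → ∀ f : F, V f) (C : Finset N),
      (C.card : ℝ) ≤ κ' * Fintype.card N →
      (∀ i ∉ C, feat' i = feat i) →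
      ∀ Pant : Finset (Finset N),
        Pant = (Finset.univ.filter fun P : Finset N =>
          P.card = k ∧ ∀ (f : F) (v : V f),
            ℓ ⟨f, v⟩ ≤ (P.filter fun t => feat' t f = v).card ∧
            (P.filter fun t => feat' t f = v).card ≤ u ⟨f, v⟩) →
        ∀ i ∉ C,
          ((Pan.filter fun P => i ∈ P).card : ℝ) / Pan.card -
              ((Pant.filter fun P => i ∈ P).card : ℝ) / Pant.card ≤
            k / (κ ^ k * Fintype.card N) :=
  external_manipulability_bound_general feat k hk ℓ u Pan hPan κ κ' hκ hrich
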